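/- Let η₁, …, η_n ∈ ℂ with |η_k| = 1 and Im η_k ≠ 0 for all k, indices mod n, and let F : {z₀, …, z_{n−1}} → ℂ satisfy for each k (indices mod n): (Re F(z_{k+1}) − Re F(z_k))·Re η_{k+1} + (Im F(z_{k+1}) − Im F(z_k))·Im η_{k+1} = 0. Then Σ_{k=0}^{n−1} (Re η_{k+1}/Im η_{k+1} − Re η_k/Im η_k)·Re F(z_k) = 0. -/

import Mathlib

/-!
With `t k = Re η k / Im η k`, cyclic summation by parts turns the sum into
`∑ t (k + 1) * (Re F k - Re F (k + 1))`, and the s-holomorphicity relation at the edge `k + 1`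
says exactly that this summand is `Im F (k + 1) - Im F k`; the result telescopes to `0`.
-/

section CyclicSums

variable {G : Type*} [AddGroup G] [Fintype G]

theorem Fintype.sum_comp_add_right_sub {M : Type*} [AddCommGroup M] (f : G → M) (a : G) :
    ∑ x, (f (x + a) - f x) = 0 := by
  rw [Finset.sum_sub_distrib]
  exact sub_eq_zero_of_eq (Equiv.sum_comp (Equiv.addRight a) f)

theorem Fintype.sum_sub_comp_add_right_mul {R : Type*} [CommRing R] (t u : G → R) (a : G) :
    ∑ x, (t (x + a) - t x) * u x = ∑ x, t (x + a) * (u x - u (x + a)) := by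
  have hsplit : ∀ x, (t (x + a) - t x) * u x
      = t (x + a) * (u x - u (x + a)) + (t (x + a) * u (x + a) - t x * u x) := fun x => by ring
  simp only [hsplit, Finset.sum_add_distrib, Fintype.sum_comp_add_right_sub (fun x => t x * u x),
    add_zero]

end CyclicSums

theorem div_mul_sub_eq_of_sub_mul_add_sub_mul_eq_zero {K : Type*} [Field K] {a a' b b' c s : K}
    (hs : s ≠ 0) (h : (a' - a) * c + (b' - b) * s = 0) : c / s * (a - a') = b' - b := by
  rw [div_mul_eq_mul_div, div_eq_iff hs]
  linear_combination -h

theorem sholomorphic_cyclic_identity_general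
    (n : ℕ) [NeZero n] (η F : ZMod n → ℂ)
    (him : ∀ k, (η k).im ≠ 0)
    (hshol : ∀ k : ZMod n,
      ((F (k + 1)).re - (F k).re) * (η (k + 1)).re
        + ((F (k + 1)).im - (F k).im) * (η (k + 1)).im = 0) :
    ∑ k : ZMod n,
        ((η (k + 1)).re / (η (k + 1)).im - (η k).re / (η k).im) * (F k).re
      = 0 := by
  calc ∑ k : ZMod n,
        ((η (k + 1)).re / (η (k + 1)).im - (η k).re / (η k).im) * (F k).re
      = ∑ k : ZMod n, (η (k + 1)).re / (η (k + 1)).im * ((F k).re - (F (k + 1)).re) :=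
        Fintype.sum_sub_comp_add_right_mul (fun k => (η k).re / (η k).im) (fun k => (F k).re) 1
    _ = ∑ k : ZMod n, ((F (k + 1)).im - (F k).im) :=
        Finset.sum_congr rfl fun k _ =>
          div_mul_sub_eq_of_sub_mul_add_sub_mul_eq_zero (him (k + 1)) (hshol k)
    _ = 0 := Fintype.sum_comp_add_right_sub (fun k => (F k).im) 1

/-- Identity (2.20): the s-holomorphicity relations around a vertex imply the
telescoping identity exhibiting `Re F` as a discrete harmonic quantity. -/
theorem sholomorphic_cyclic_identity
    (n : ℕ) [NeZero n] (η F : ZMod n → ℂ)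
    (habs : ∀ k, ‖η k‖ = 1)
    (him : ∀ k, (η k).im ≠ 0)
    (hshol : ∀ k : ZMod n,
      ((F (k + 1)).re - (F k).re) * (η (k + 1)).re
        + ((F (k + 1)).im - (F k).im) * (η (k + 1)).im = 0) :
    ∑ k : ZMod n,
        ((η (k + 1)).re / (η (k + 1)).im - (η k).re / (η k).im) * (F k).re
      = 0 :=
  sholomorphic_cyclic_identity_general n η F him hshol
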